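/- The difference between the two-stage description length of the fully independent model and that of any dependency forest model equals N·Σ_{i=1}^n θ(X_i, X_{q(i)}), where θ(X_i,X_j) = Î(X_i,X_j) - ((k_i-1)(k_j-1)/(2N))·log₂ N and Î denotes empirical mutual information computed from frequencies f. -/

import Mathlib

/-- The difference between the two-stage description length of the fully independent
model and that of a dependency forest model equals `N · Σᵢ θ(Xᵢ, X_{q(i)})`, where
`θ(Xᵢ,Xⱼ) = Î(Xᵢ,Xⱼ) - ((kᵢ-1)(kⱼ-1)/(2N))·log₂ N` and `θ = 0` for roots
(parent `X₀` constant, `k₀ = 1`). -/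
theorem forest_mdl_difference {n N : ℕ} (hN : 0 < N)
    (α : Fin n → Type) [∀ i, Fintype (α i)] [∀ i, DecidableEq (α i)]
    (x : Fin N → ∀ i, α i) (q : Fin n → Option (Fin n))
    (k : Fin n → ℝ) (hk : ∀ i, k i = Fintype.card (α i))
    (f1 : ∀ i : Fin n, α i → ℝ)
    (hf1 : ∀ i a, f1 i a = (Finset.univ.filter fun t => x t i = a).card)
    (f2 : ∀ i j : Fin n, α i → α j → ℝ)
    (hf2 : ∀ i j a b, f2 i j a b =
      (Finset.univ.filter fun t => x t i = a ∧ x t j = b).card)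
    (Ihat : Fin n → Fin n → ℝ)
    (hIhat : ∀ i j, Ihat i j = ∑ a, ∑ b,
      (f2 i j a b / N) * Real.logb 2 ((f2 i j a b / N) / ((f1 i a / N) * (f1 j b / N))))
    (θ : Fin n → ℝ)
    (hθ : ∀ i, θ i = match q i with
      | none => 0
      | some j => Ihat i j - ((k i - 1) * (k j - 1) / (2 * N)) * Real.logb 2 N)
    (DLforest DLindep : ℝ)
    (hDLforest : DLforest =
      (∑ i, ((k i - 1) * (match q i with | none => (1 : ℝ) | some j => k j) / 2)
            * Real.logb 2 N)
      + ∑ i, (match q i with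
         | none => -∑ a, f1 i a * Real.logb 2 (f1 i a / N)
         | some j => -∑ a, ∑ b, f2 i j a b * Real.logb 2 (f2 i j a b / f1 j b)))
    (hDLindep : DLindep =
      (∑ i, ((k i - 1) / 2) * Real.logb 2 N)
      + ∑ i, (-∑ a, f1 i a * Real.logb 2 (f1 i a / N))) :
    DLindep - DLforest = N * ∑ i, θ i := by
  have hNpos : (0:ℝ) < N := by exact_mod_cast hN
  -- fiberwise sum: f1 i a = ∑ b, f2 i j a b
  have hfib : ∀ (i j : Fin n) (a : α i), f1 i a = ∑ b, f2 i j a b := by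
    intro i j a
    rw [hf1]
    have := Finset.card_eq_sum_card_fiberwise
      (s := Finset.univ.filter fun t => x t i = a) (t := (Finset.univ : Finset (α j)))
      (f := fun t => x t j) (fun t _ => Finset.mem_univ _)
    rw [this]
    push_cast
    refine Finset.sum_congr rfl fun b _ => ?_
    rw [hf2, Finset.filter_filter]
  have hf2nonneg : ∀ (i j : Fin n) (a : α i) (b : α j), 0 ≤ f2 i j a b := by
    intro i j a b; rw [hf2]; positivity
  have hle1 : ∀ (i j : Fin n) (a : α i) (b : α j), f2 i j a b ≤ f1 i a := by
    intro i j a b; rw [hf1, hf2]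
    exact_mod_cast Finset.card_le_card (by
      intro t ht
      simp only [Finset.mem_filter] at *
      exact ⟨ht.1, ht.2.1⟩)
  have hle2 : ∀ (i j : Fin n) (a : α i) (b : α j), f2 i j a b ≤ f1 j b := by
    intro i j a b; rw [hf1, hf2]
    exact_mod_cast Finset.card_le_card (by
      intro t ht
      simp only [Finset.mem_filter] at *
      exact ⟨ht.1, ht.2.2⟩)
  rw [hDLindep, hDLforest, Finset.mul_sum]
  rw [show ∀ A B C D : ℝ, (A + B) - (C + D) = (A - C) + (B - D) by intros; ring]
  rw [← Finset.sum_sub_distrib, ← Finset.sum_sub_distrib, ← Finset.sum_add_distrib]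
  refine Finset.sum_congr rfl fun i _ => ?_
  rw [hθ i]
  cases hqi : q i with
  | none => simp only [hqi]; ring
  | some j =>
    simp only [hqi]
    rw [hIhat]
    -- key pointwise identity
    have key : ∀ (a : α i) (b : α j),
        (N:ℝ) * ((f2 i j a b / N) * Real.logb 2
          ((f2 i j a b / N) / ((f1 i a / N) * (f1 j b / N))))
        = f2 i j a b * Real.logb 2 (f2 i j a b / f1 j b)
          - f2 i j a b * Real.logb 2 (f1 i a / N) := by
      intro a b
      rcases eq_or_lt_of_le (hf2nonneg i j a b) with h0 | hpos
      · rw [← h0]; simp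
      · have ha : 0 < f1 i a := lt_of_lt_of_le hpos (hle1 i j a b)
        have hb : 0 < f1 j b := lt_of_lt_of_le hpos (hle2 i j a b)
        have harg : (f2 i j a b / N) / ((f1 i a / N) * (f1 j b / N))
            = f2 i j a b * N / (f1 i a * f1 j b) := by
          field_simp
        rw [harg,
          Real.logb_div (by positivity) (by positivity),
          Real.logb_mul (ne_of_gt hpos) (ne_of_gt hNpos),
          Real.logb_mul (ne_of_gt ha) (ne_of_gt hb),
          Real.logb_div (ne_of_gt hpos) (ne_of_gt hb),
          Real.logb_div (ne_of_gt ha) (ne_of_gt hNpos)]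
        field_simp
        ring
    have hdata : (N:ℝ) * (∑ a, ∑ b, (f2 i j a b / N) * Real.logb 2
          ((f2 i j a b / N) / ((f1 i a / N) * (f1 j b / N))))
        = (∑ a, ∑ b, f2 i j a b * Real.logb 2 (f2 i j a b / f1 j b))
          - ∑ a, f1 i a * Real.logb 2 (f1 i a / N) := by
      rw [Finset.mul_sum]
      rw [show (∑ a, f1 i a * Real.logb 2 (f1 i a / N))
          = ∑ a : α i, ∑ b : α j, f2 i j a b * Real.logb 2 (f1 i a / N) from
        Finset.sum_congr rfl fun a _ => by rw [hfib i j a, Finset.sum_mul]]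
      rw [← Finset.sum_sub_distrib]
      refine Finset.sum_congr rfl fun a _ => ?_
      rw [Finset.mul_sum, ← Finset.sum_sub_distrib]
      exact Finset.sum_congr rfl fun b _ => key a b
    rw [mul_sub, hdata]
    have : (N:ℝ) ≠ 0 := ne_of_gt hNpos
    field_simp
    ring
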